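/- arXiv:1112.0083 — 3 statements merged into one kernel-verified Lean document; each statement's English description precedes it below -/
import Mathlib

section
/- Let M : ℝ → ℝ be measurable, nonnegative, not a.e. zero, satisfying M(E) = 0 for E ≤ E₀ and M(E) ≤ C(1+|E|)^η. Then X(μ) = ∫ f(E,β,μ) M(E) dE (with β > 0 fixed) defines a strictly increasing continuous function of μ ∈ ℝ, and in particular X is injective. -/
open MeasureTheory Set Filter Topology

/-- The Fermi–Dirac distribution `f(E,β,μ) = (1 + exp(β(E-μ)))⁻¹`. -/
noncomputable def fermi (β μ E : ℝ) : ℝ := (1 + Real.exp (β * (E - μ)))⁻¹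

theorem X_strictMono_continuous_injective
    (β E₀ C η : ℝ) (hβ : 0 < β) (M : ℝ → ℝ)
    (hMmeas : Measurable M) (hMnn : ∀ E, 0 ≤ M E)
    (hMnz : ¬ (∀ᵐ E ∂volume, M E = 0))
    (hA : ∀ E ≤ E₀, M E = 0)
    (hB : ∀ E, M E ≤ C * (1 + |E|) ^ η) :
    StrictMono (fun μ => ∫ E, fermi β μ E * M E) ∧
    Continuous (fun μ => ∫ E, fermi β μ E * M E) ∧
    Function.Injective (fun μ => ∫ E, fermi β μ E * M E) := by
  set C' : ℝ := max C 0 with hC'def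
  have hC'0 : 0 ≤ C' := le_max_right _ _
  set P : ℝ → ℝ := fun E => C' * (1 + |E|) ^ η with hPdef
  have habs : ∀ E : ℝ, (0:ℝ) < 1 + |E| := fun E => by positivity
  have hPnn : ∀ E, 0 ≤ P E := fun E => mul_nonneg hC'0 (Real.rpow_nonneg (habs E).le _)
  have hMP : ∀ E, M E ≤ P E := fun E =>
    (hB E).trans (mul_le_mul_of_nonneg_right (le_max_left _ _)
      (Real.rpow_nonneg (habs E).le _))
  have hPcont : Continuous P :=
    continuous_const.mul ((continuous_const.add continuous_abs).rpow_const
      (fun x => Or.inl (habs x).ne'))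
  -- choose T ≥ 0 such that P x ≤ exp ((β/2) x) for x ≥ T
  obtain ⟨T, hT0, hT⟩ : ∃ T, 0 ≤ T ∧ ∀ x ≥ T, P x ≤ Real.exp ((β/2) * x) := by
    have hb2 : (0:ℝ) < β/2 := by positivity
    have h0 := tendsto_rpow_mul_exp_neg_mul_atTop_nhds_zero η (β/2) hb2
    have h1 : Filter.Tendsto (fun x : ℝ =>
        C' * Real.exp (β/2) * ((1+x) ^ η * Real.exp (-(β/2) * (1+x))))
        Filter.atTop (𝓝 (C' * Real.exp (β/2) * 0)) :=
      Filter.Tendsto.const_mul _ (h0.comp (tendsto_atTop_add_const_left _ 1 Filter.tendsto_id))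
    rw [mul_zero] at h1
    have h2 := h1.eventually_lt_const (by norm_num : (0:ℝ) < 1)
    obtain ⟨T₀, hT₀⟩ := Filter.eventually_atTop.mp h2
    refine ⟨max T₀ 0, le_max_right _ _, fun x hx => ?_⟩
    have hx0 : 0 ≤ x := le_trans (le_max_right _ _) hx
    have hkey := (hT₀ x (le_trans (le_max_left _ _) hx)).le
    have hrw : C' * Real.exp (β/2) * ((1+x) ^ η * Real.exp (-(β/2) * (1+x)))
        = P x * Real.exp (-(β/2) * x) := by
      simp only [hPdef, abs_of_nonneg hx0]
      rw [show -(β/2)*(1+x) = -(β/2) + -(β/2)*x by ring, Real.exp_add, Real.exp_neg]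
      field_simp
    rw [hrw] at hkey
    have h3 := mul_le_mul_of_nonneg_right hkey (Real.exp_nonneg (β/2*x))
    rw [one_mul, mul_assoc, ← Real.exp_add,
      show -(β/2)*x + β/2*x = 0 by ring, Real.exp_zero, mul_one] at h3
    exact h3
  -- basic fermi facts
  have hfpos : ∀ μ E, 0 ≤ fermi β μ E := by
    intro μ E; unfold fermi; positivity
  have hf1 : ∀ μ E, fermi β μ E ≤ 1 := by
    intro μ E; unfold fermi
    have := Real.exp_pos (β*(E-μ))
    rw [inv_le_one_iff₀]
    right; linarith
  have hfexp : ∀ μ E, fermi β μ E ≤ Real.exp (β * (μ - E)) := by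
    intro μ E; unfold fermi
    have h1 : Real.exp (β*(μ-E)) = (Real.exp (β*(E-μ)))⁻¹ := by
      rw [← Real.exp_neg]; ring_nf
    rw [h1]
    exact inv_anti₀ (Real.exp_pos _) (le_add_of_nonneg_left zero_le_one)
  -- the dominating function
  set bnd : ℝ → ℝ → ℝ := fun m => (Ici E₀).indicator
      (fun E => min (P E) (Real.exp (β * (m - E)) * P E)) with hbnddef
  have hdom : ∀ m μ, μ ≤ m → ∀ E, ‖fermi β μ E * M E‖ ≤ bnd m E := by
    intro m μ hμ E
    rw [Real.norm_eq_abs, abs_of_nonneg (mul_nonneg (hfpos μ E) (hMnn E))]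
    by_cases hE : E ∈ Ici E₀
    · rw [hbnddef]; simp only [indicator_of_mem hE]
      refine le_min ?_ ?_
      · calc fermi β μ E * M E ≤ 1 * M E :=
              mul_le_mul_of_nonneg_right (hf1 μ E) (hMnn E)
          _ = M E := one_mul _
          _ ≤ P E := hMP E
      · refine mul_le_mul ?_ (hMP E) (hMnn E) (Real.exp_pos _).le
        refine (hfexp μ E).trans (Real.exp_le_exp.mpr ?_)
        exact mul_le_mul_of_nonneg_left (by linarith) hβ.le
    · rw [hbnddef]; simp only [indicator_of_notMem hE]
      have hE' : E ≤ E₀ := le_of_lt (not_le.mp (by simpa using hE))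
      rw [hA E hE', mul_zero]
  have hbnd_inner_meas : ∀ m : ℝ, Measurable fun E =>
      min (P E) (Real.exp (β * (m - E)) * P E) := by
    intro m
    exact hPcont.measurable.min
      (((Real.continuous_exp.comp (continuous_const.mul
        (continuous_const.sub continuous_id))).mul hPcont).measurable)
  have hbnd_int : ∀ m, Integrable (bnd m) := by
    intro m
    rw [hbnddef]
    rw [integrable_indicator_iff measurableSet_Ici]
    have h1 : IntegrableOn (fun E => min (P E) (Real.exp (β*(m-E)) * P E)) (Icc E₀ T) := by
      refine Integrable.mono' (hPcont.integrableOn_Icc) ((hbnd_inner_meas m).aestronglyMeasurable.restrict) ?_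
      filter_upwards with E
      rw [Real.norm_eq_abs, abs_of_nonneg (le_min (hPnn E) (mul_nonneg (Real.exp_pos _).le (hPnn E)))]
      exact min_le_left _ _
    have h2 : IntegrableOn (fun E => min (P E) (Real.exp (β*(m-E)) * P E)) (Ioi T) := by
      refine Integrable.mono' (((exp_neg_integrableOn_Ioi T (by positivity : (0:ℝ) < β/2)).const_mul
        (Real.exp (β*m)))) ((hbnd_inner_meas m).aestronglyMeasurable.restrict) ?_
      rw [ae_restrict_iff' measurableSet_Ioi]
      filter_upwards with E hE
      rw [Real.norm_eq_abs, abs_of_nonneg (le_min (hPnn E) (mul_nonneg (Real.exp_pos _).le (hPnn E)))]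
      calc min (P E) (Real.exp (β*(m-E)) * P E) ≤ Real.exp (β*(m-E)) * P E := min_le_right _ _
        _ ≤ Real.exp (β*(m-E)) * Real.exp ((β/2)*E) :=
            mul_le_mul_of_nonneg_left (hT E (le_of_lt hE)) (Real.exp_pos _).le
        _ = Real.exp (β*m) * Real.exp (-(β/2) * E) := by
            rw [← Real.exp_add, ← Real.exp_add]; ring_nf
    refine IntegrableOn.mono_set (h1.union h2) ?_
    intro x hx
    rcases le_or_gt x T with h | h
    · exact Or.inl ⟨hx, h⟩
    · exact Or.inr h
  -- measurability and integrability of the integrand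
  have hfermiE : ∀ μ, Continuous (fun E => fermi β μ E) := by
    intro μ
    refine Continuous.inv₀ (continuous_const.add (Real.continuous_exp.comp
      (continuous_const.mul (continuous_id.sub continuous_const)))) ?_
    intro E; positivity
  have hFmeas : ∀ μ : ℝ, AEStronglyMeasurable (fun E => fermi β μ E * M E) volume := fun μ =>
    ((hfermiE μ).measurable.mul hMmeas).aestronglyMeasurable
  have hFint : ∀ μ, Integrable (fun E => fermi β μ E * M E) := fun μ =>
    (hbnd_int μ).mono' (hFmeas μ) (Filter.Eventually.of_forall (hdom μ μ le_rfl))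
  -- strict monotonicity
  have hmono : StrictMono (fun μ => ∫ E, fermi β μ E * M E) := by
    intro μ₁ μ₂ h12
    have hlt : ∀ E, fermi β μ₁ E < fermi β μ₂ E := by
      intro E; unfold fermi
      have h1 : (0:ℝ) < 1 + Real.exp (β * (E - μ₂)) := by positivity
      have h2 : 1 + Real.exp (β*(E-μ₂)) < 1 + Real.exp (β*(E-μ₁)) := by
        have : β*(E-μ₂) < β*(E-μ₁) := mul_lt_mul_of_pos_left (by linarith) hβ
        linarith [Real.exp_lt_exp.mpr this]
      exact inv_strictAnti₀ h1 h2
    have hgi : Integrable (fun E => (fermi β μ₂ E - fermi β μ₁ E) * M E) := by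
      have := (hFint μ₂).sub (hFint μ₁)
      refine this.congr (Filter.Eventually.of_forall fun E => ?_)
      simp only [Pi.sub_apply]; ring
    have hpos : 0 < ∫ E, (fermi β μ₂ E - fermi β μ₁ E) * M E := by
      rw [integral_pos_iff_support_of_nonneg
        (fun E => mul_nonneg (sub_nonneg.2 (hlt E).le) (hMnn E)) hgi]
      have hsupp : (Function.support fun E => (fermi β μ₂ E - fermi β μ₁ E) * M E)
          = Function.support M := by
        ext E
        simp only [Function.mem_support, mul_ne_zero_iff]
        constructor
        · exact fun h => h.2
        · exact fun h => ⟨sub_ne_zero.mpr (hlt E).ne', h⟩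
      rw [hsupp]
      rw [ae_iff] at hMnz
      exact pos_iff_ne_zero.mpr hMnz
    have heq : ∫ E, (fermi β μ₂ E - fermi β μ₁ E) * M E
        = (∫ E, fermi β μ₂ E * M E) - ∫ E, fermi β μ₁ E * M E := by
      rw [← integral_sub (hFint μ₂) (hFint μ₁)]
      congr 1; funext E; ring
    simp only []
    linarith [heq ▸ hpos]
  refine ⟨hmono, ?_, hmono.injective⟩
  rw [continuous_iff_continuousAt]
  intro x₀
  apply continuousAt_of_dominated (bound := bnd (x₀+1))
  · exact Filter.Eventually.of_forall hFmeas
  · filter_upwards [eventually_le_nhds (lt_add_one x₀)] with μ hμ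
    exact Filter.Eventually.of_forall (hdom (x₀+1) μ hμ)
  · exact hbnd_int _
  · refine Filter.Eventually.of_forall fun E => ?_
    refine ContinuousAt.mul ?_ continuousAt_const
    refine ContinuousAt.inv₀ ?_ (by positivity)
    exact (continuous_const.add (Real.continuous_exp.comp
      (continuous_const.mul (continuous_const.sub continuous_id)))).continuousAt
end

section
/- Let t be an N×N doubly substochastic nonnegative real matrix with column sums Σ_i t_{ij} = M_j > 0, let μ_t = (μ_{p+1},…,μ_N) be fixed reals, let β > 0, and for j ≤ p let μ_j(X_j) be the inverse of X_j(μ) = ∫ f(E,β,μ) M_j(E) dE. Define F_i(X) = Σ_{j≤p} ∫ f(E,β,μ_j(X_j)) t_{ij}(E) dE + Σ_{j>p} ∫ f(E,β,μ_j) t_{ij}(E) dE. If μ̲ = min_j μ_j (j>p), μ̄ = max_j μ_j (j>p), X̲_i = X_i(μ̲), X̄_i = X_i(μ̄), and Σ = Π_i [X̲_i, X̄_i], then F(Σ) ⊆ Σ. -/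
open MeasureTheory Set Finset

lemma fermi_mono (β : ℝ) (hβ : 0 < β) {a b : ℝ} (hab : a ≤ b) (E : ℝ) :
    fermi β a E ≤ fermi β b E := by
  unfold fermi
  have h1 : (0:ℝ) < 1 + Real.exp (β * (E - b)) := by positivity
  apply inv_anti₀ h1
  have : β * (E - b) ≤ β * (E - a) := by nlinarith
  have := Real.exp_le_exp.mpr this
  linarith

/-- Lemma 1 of the paper: the box `Σ` is invariant under the map `F`
(stated in terms of the probe chemical potentials `ν j ∈ [lo, hi]`). -/
theorem box_invariance_voltage_probes
    (N p : ℕ) (hp : p < N) (β : ℝ) (hβ : 0 < β)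
    (t : Fin N → Fin N → ℝ → ℝ) (ht : ∀ i j E, 0 ≤ t i j E)
    (M : Fin N → ℝ → ℝ)
    (hMdef : ∀ j E, M j E = ∑ i, t i j E)
    (hrow : ∀ i E, ∑ j, t i j E = M i E)
    (μ : Fin N → ℝ) (lo hi : ℝ)
    (hlo : IsLeast (μ '' {j : Fin N | p ≤ (j : ℕ)}) lo)
    (hhi : IsGreatest (μ '' {j : Fin N | p ≤ (j : ℕ)}) hi)
    (hint : ∀ (i j : Fin N) (c : ℝ), Integrable (fun E => fermi β c E * t i j E)) :
    ∀ ν : Fin N → ℝ,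
      (∀ j : Fin N, (j : ℕ) < p → ν j ∈ Set.Icc lo hi) →
      (∀ j : Fin N, p ≤ (j : ℕ) → ν j = μ j) →
      ∀ i : Fin N, (i : ℕ) < p →
        (∑ j, ∫ E, fermi β (ν j) E * t i j E) ∈
          Set.Icc (∫ E, fermi β lo E * M i E) (∫ E, fermi β hi E * M i E) := by
  intro ν hνlt hνge i hip
  -- all ν j lie in [lo, hi]
  have hν : ∀ j : Fin N, lo ≤ ν j ∧ ν j ≤ hi := by
    intro j
    by_cases hj : (j : ℕ) < p
    · exact ⟨(hνlt j hj).1, (hνlt j hj).2⟩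
    · push_neg at hj
      rw [hνge j hj]
      have hmem : μ j ∈ μ '' {j : Fin N | p ≤ (j : ℕ)} := ⟨j, hj, rfl⟩
      exact ⟨hlo.2 hmem, hhi.2 hmem⟩
  have key : ∀ c : ℝ, (∫ E, fermi β c E * M i E) = ∑ j, ∫ E, fermi β c E * t i j E := by
    intro c
    rw [← integral_finset_sum _ (fun j _ => hint i j c)]
    congr 1
    ext E
    rw [← hrow i E, Finset.mul_sum]
  constructor
  · rw [key lo]
    apply Finset.sum_le_sum
    intro j _
    apply integral_mono (hint i j lo) (hint i j (ν j))
    intro E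
    exact mul_le_mul_of_nonneg_right (fermi_mono β hβ (hν j).1 E) (ht i j E)
  · rw [key hi]
    apply Finset.sum_le_sum
    intro j _
    apply integral_mono (hint i j (ν j)) (hint i j hi)
    intro E
    exact mul_le_mul_of_nonneg_right (fermi_mono β hβ (hν j).2 E) (ht i j E)
end

section
/- In the setting of the previous statement, assume additionally Condition (C): for every probe index j ≤ p there is a set 𝓔_j of positive Lebesgue measure on which M̃_j(E) = Σ_{i>p} t_{ij}(E) > 0. Then there exists θ < 1 such that ‖F(X) − F(X')‖₁ ≤ θ‖X − X'‖₁ for all X, X' ∈ Σ; consequently the self-consistency equation F(X) = X has a unique solution in Σ. -/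
open MeasureTheory Set Finset

/-!
For `c ≤ c'` the increment of the Fermi function factors as
`f(c') - f(c) = (1 - e^{-β(c'-c)}) f(c') (1 - f(c))`, so on `[lo, hi]` it is squeezed, up to the
same scalar, between the fixed weights `f(lo)(1 - f(hi))` and `f(hi)(1 - f(lo))`. Hence for each
probe `j` the thermostat channels `M̃_j` absorb at least the fraction
`ε_j = ∫ f(lo)(1 - f(hi)) M̃_j / ∫ f(hi)(1 - f(lo)) M_j` of `X_j(c') - X_j(c)`, which is positive
by Condition (C), and by the sum rule only the rest is passed on to the probes. Summing the columns
gives an `ℓ¹`-contraction with constant `1 - min_j ε_j` on the box, which `F` maps into itself, and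
Banach's fixed point theorem applies.
-/

open Filter Asymptotics

lemma fermi_pos (β c E : ℝ) : 0 < fermi β c E := by
  unfold fermi; positivity

lemma fermi_lt_one (β c E : ℝ) : fermi β c E < 1 :=
  inv_lt_one_of_one_lt₀ (lt_add_of_pos_right 1 (Real.exp_pos _))

lemma fermi_mono_s11 {β : ℝ} (hβ : 0 ≤ β) (E : ℝ) : Monotone fun c => fermi β c E :=
  fun _ _ h => inv_anti₀ (by positivity) (by gcongr)

lemma continuous_fermi (β c : ℝ) : Continuous (fermi β c) :=
  .inv₀ (by fun_prop) fun _ => by positivity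

lemma fermi_le_exp (β c E : ℝ) : fermi β c E ≤ Real.exp (β * c) * Real.exp (-(β * E)) := by
  rw [← Real.exp_add, fermi, show β * c + -(β * E) = -(β * (E - c)) by ring, Real.exp_neg]
  gcongr
  linarith [Real.exp_pos (β * (E - c))]

lemma fermi_sub_fermi (β c c' E : ℝ) :
    fermi β c' E - fermi β c E
      = (1 - Real.exp (-(β * (c' - c)))) * (fermi β c' E * (1 - fermi β c E)) := by
  have hab : Real.exp (-(β * (c' - c))) * Real.exp (β * (E - c)) = Real.exp (β * (E - c')) := by
    rw [← Real.exp_add]; ring_nf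
  unfold fermi
  field_simp
  rw [← hab]
  ring

lemma one_add_abs_rpow_isBigO_exp (η : ℝ) {b : ℝ} (hb : 0 < b) :
    (fun x : ℝ => (1 + |x|) ^ η) =O[atTop] fun x => Real.exp (b * x) := by
  have h : (fun x : ℝ => (1 + x) ^ η) =O[atTop] fun x => Real.exp (b * (1 + x)) :=
    ((isLittleO_rpow_exp_pos_mul_atTop η hb).comp_tendsto
      (tendsto_atTop_add_const_left atTop 1 tendsto_id)).isBigO
  have hexp : (fun x : ℝ => Real.exp (b * (1 + x))) = fun x => Real.exp b * Real.exp (b * x) := by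
    ext x; rw [← Real.exp_add]; ring_nf
  rw [hexp] at h
  refine (h.trans (isBigO_const_mul_self _ _ _)).congr' ?_ .rfl
  filter_upwards [eventually_ge_atTop 0] with x hx
  rw [abs_of_nonneg hx]

lemma integrableOn_Ioi_fermi_mul_rpow {β : ℝ} (hβ : 0 < β) (c η a : ℝ) :
    IntegrableOn (fun E => fermi β c E * (1 + |E|) ^ η) (Ioi a) := by
  refine integrable_of_isBigO_exp_neg (b := β / 2) (by positivity) ?_ ?_
  · refine Continuous.continuousOn ?_
    refine .mul (continuous_fermi β c) (.rpow_const (by fun_prop) fun x => Or.inl ?_)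
    positivity
  · have hf : (fun E => fermi β c E) =O[atTop] fun E => Real.exp (-β * E) := by
      refine IsBigO.of_bound (Real.exp (β * c)) (.of_forall fun E => ?_)
      rw [Real.norm_of_nonneg (fermi_pos β c E).le, Real.norm_of_nonneg (Real.exp_pos _).le,
        neg_mul]
      exact fermi_le_exp β c E
    refine (hf.mul (one_add_abs_rpow_isBigO_exp η (half_pos hβ))).congr_right fun E => ?_
    rw [← Real.exp_add]; ring_nf

lemma integrable_fermi_mul {β E₀ C η : ℝ} (hβ : 0 < β) {m : ℝ → ℝ} (hm : Measurable m)
    (hm0 : ∀ E, 0 ≤ m E) (hvanish : ∀ E ≤ E₀, m E = 0)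
    (hgrowth : ∀ E, m E ≤ C * (1 + |E|) ^ η) (c : ℝ) :
    Integrable fun E => fermi β c E * m E := by
  rw [← integrableOn_univ, ← Iic_union_Ioi (a := E₀)]
  refine .union ?_ ?_
  · exact integrableOn_zero.congr_fun (fun E hE => by simp [hvanish E hE]) measurableSet_Iic
  · refine ((integrableOn_Ioi_fermi_mul_rpow hβ c η E₀).const_mul (max C 0)).mono'
      ((continuous_fermi β c).measurable.mul hm).aestronglyMeasurable (.of_forall fun E => ?_)
    rw [Real.norm_of_nonneg (mul_nonneg (fermi_pos β c E).le (hm0 E)), mul_left_comm]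
    gcongr
    · exact (fermi_pos β c E).le
    · exact (hgrowth E).trans (by gcongr; exact le_max_left C 0)

lemma integral_fermi_mul_mono {β : ℝ} (hβ : 0 ≤ β) {m : ℝ → ℝ} (hm0 : ∀ E, 0 ≤ m E)
    (hint : ∀ c, Integrable fun E => fermi β c E * m E) :
    Monotone fun c => ∫ E, fermi β c E * m E := fun c c' h =>
  integral_mono (hint c) (hint c') fun E => mul_le_mul_of_nonneg_right (fermi_mono_s11 hβ E h) (hm0 E)

lemma integral_fermi_mul_sub_integral_fermi_mul {β : ℝ} {m : ℝ → ℝ}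
    (hint : ∀ c, Integrable fun E => fermi β c E * m E) (c c' : ℝ) :
    (∫ E, fermi β c' E * m E) - ∫ E, fermi β c E * m E
      = (1 - Real.exp (-(β * (c' - c)))) * ∫ E, (1 - fermi β c E) * (fermi β c' E * m E) := by
  rw [← integral_sub (hint c') (hint c), ← integral_const_mul]
  refine integral_congr_ae (.of_forall fun E => ?_)
  dsimp only
  rw [← sub_mul, fermi_sub_fermi]
  ring

lemma integrable_one_sub_fermi_mul {β : ℝ} {m : ℝ → ℝ}
    (hint : ∀ c, Integrable fun E => fermi β c E * m E) (c c' : ℝ) :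
    Integrable fun E => (1 - fermi β c E) * (fermi β c' E * m E) := by
  refine (hint c').bdd_mul (c := 1)
    (continuous_const.sub (continuous_fermi β c)).aestronglyMeasurable (.of_forall fun E => ?_)
  rw [Real.norm_of_nonneg (sub_nonneg.2 (fermi_lt_one β c E).le)]
  linarith [fermi_pos β c E]

lemma one_sub_fermi_mul_fermi_mul_le {β : ℝ} (hβ : 0 ≤ β) {c c' d d' g g' : ℝ} (E : ℝ)
    (hdc : d ≤ c) (hc'd' : c' ≤ d') (hg : 0 ≤ g) (hgg' : g ≤ g') :
    (1 - fermi β c E) * (fermi β c' E * g) ≤ (1 - fermi β d E) * (fermi β d' E * g') :=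
  mul_le_mul (sub_le_sub_left (fermi_mono_s11 hβ E hdc) 1)
    (mul_le_mul (fermi_mono_s11 hβ E hc'd') hgg' hg (fermi_pos β d' E).le)
    (mul_nonneg (fermi_pos β c' E).le hg) (sub_nonneg.2 (fermi_lt_one β d E).le)

lemma exists_pos_mul_sub_integral_fermi_mul_le {β : ℝ} (hβ : 0 ≤ β) {lo hi : ℝ} (hlohi : lo ≤ hi)
    {m m' : ℝ → ℝ} (hm'0 : ∀ E, 0 ≤ m' E) (hle : ∀ E, m' E ≤ m E)
    (hint : ∀ c, Integrable fun E => fermi β c E * m E)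
    (hint' : ∀ c, Integrable fun E => fermi β c E * m' E) (hpos : volume {E | 0 < m' E} ≠ 0) :
    ∃ ε > 0, ∀ c c', lo ≤ c → c ≤ c' → c' ≤ hi →
      ε * ((∫ E, fermi β c' E * m E) - ∫ E, fermi β c E * m E)
        ≤ (∫ E, fermi β c' E * m' E) - ∫ E, fermi β c E * m' E := by
  set a := ∫ E, (1 - fermi β hi E) * (fermi β lo E * m' E)
  set b := ∫ E, (1 - fermi β lo E) * (fermi β hi E * m E)
  have ha : 0 < a := by
    refine (integral_pos_iff_support_of_nonneg (fun E => ?_)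
      (integrable_one_sub_fermi_mul hint' hi lo)).2 (pos_iff_ne_zero.2 fun h => hpos ?_)
    · exact mul_nonneg (sub_nonneg.2 (fermi_lt_one β hi E).le)
        (mul_nonneg (fermi_pos β lo E).le (hm'0 E))
    · refine measure_mono_null (fun E (hE : 0 < m' E) => ?_) h
      exact (mul_pos (sub_pos.2 (fermi_lt_one β hi E)) (mul_pos (fermi_pos β lo E) hE)).ne'
  have hab : a ≤ b := integral_mono (integrable_one_sub_fermi_mul hint' hi lo)
    (integrable_one_sub_fermi_mul hint lo hi) fun E =>
      one_sub_fermi_mul_fermi_mul_le hβ E hlohi hlohi (hm'0 E) (hle E)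
  have hb : 0 < b := ha.trans_le hab
  refine ⟨a / b, div_pos ha hb, fun c c' hc hcc' hc' => ?_⟩
  have hgap : 0 ≤ 1 - Real.exp (-(β * (c' - c))) :=
    sub_nonneg.2 (Real.exp_le_one_iff.2 (neg_nonpos.2 (mul_nonneg hβ (sub_nonneg.2 hcc'))))
  rw [integral_fermi_mul_sub_integral_fermi_mul hint,
    integral_fermi_mul_sub_integral_fermi_mul hint']
  calc a / b * ((1 - Real.exp (-(β * (c' - c)))) * ∫ E, (1 - fermi β c E) * (fermi β c' E * m E))
      ≤ a / b * ((1 - Real.exp (-(β * (c' - c)))) * b) := by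
        gcongr
        exact integral_mono (integrable_one_sub_fermi_mul hint c c')
          (integrable_one_sub_fermi_mul hint lo hi) fun E =>
            one_sub_fermi_mul_fermi_mul_le hβ E hc hc' (hm'0 E |>.trans (hle E)) le_rfl
    _ = (1 - Real.exp (-(β * (c' - c)))) * a := by
        field_simp [hb.ne']
    _ ≤ (1 - Real.exp (-(β * (c' - c)))) * ∫ E, (1 - fermi β c E) * (fermi β c' E * m' E) := by
        gcongr
        exact integral_mono (integrable_one_sub_fermi_mul hint' hi lo)
          (integrable_one_sub_fermi_mul hint' c c') fun E =>
            one_sub_fermi_mul_fermi_mul_le hβ E (hcc'.trans hc') (hc.trans hcc') (hm'0 E) le_rfl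

lemma exists_pos_sum_abs_sub_integral_fermi_mul_le {ι : Type*} (s : Finset ι) {β : ℝ}
    (hβ : 0 ≤ β) {lo hi : ℝ} (hlohi : lo ≤ hi) {τ : ι → ℝ → ℝ} {m m' : ℝ → ℝ}
    (hτ0 : ∀ i E, 0 ≤ τ i E) (hm'0 : ∀ E, 0 ≤ m' E)
    (hτint : ∀ i c, Integrable fun E => fermi β c E * τ i E)
    (hm'int : ∀ c, Integrable fun E => fermi β c E * m' E)
    (hsplit : ∀ E, m E = ∑ i ∈ s, τ i E + m' E) (hpos : volume {E | 0 < m' E} ≠ 0) :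
    ∃ ε > 0, ∀ c ∈ Icc lo hi, ∀ c' ∈ Icc lo hi,
      ∑ i ∈ s, |(∫ E, fermi β c E * τ i E) - ∫ E, fermi β c' E * τ i E|
        ≤ (1 - ε) * |(∫ E, fermi β c E * m E) - ∫ E, fermi β c' E * m E| := by
  have hm0 : ∀ E, 0 ≤ m E := fun E =>
    hsplit E ▸ add_nonneg (sum_nonneg fun i _ => hτ0 i E) (hm'0 E)
  have hmint : ∀ c, Integrable fun E => fermi β c E * m E := fun c => by
    simp only [hsplit, mul_add, mul_sum]
    exact (integrable_finsetSum s fun i _ => hτint i c).add (hm'int c)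
  have hmsplit : ∀ c, ∫ E, fermi β c E * m E
      = ∑ i ∈ s, (∫ E, fermi β c E * τ i E) + ∫ E, fermi β c E * m' E := fun c => by
    simp only [hsplit, mul_add, mul_sum]
    rw [integral_add (integrable_finsetSum s fun i _ => hτint i c) (hm'int c),
      integral_finsetSum s fun i _ => hτint i c]
  obtain ⟨ε, hε, hratio⟩ := exists_pos_mul_sub_integral_fermi_mul_le hβ hlohi hm'0
    (fun E => hsplit E ▸ le_add_of_nonneg_left (sum_nonneg fun i _ => hτ0 i E)) hmint hm'int hpos
  refine ⟨ε, hε, fun c hc c' hc' => ?_⟩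
  wlog hcc' : c ≤ c' generalizing c c'
  · simpa only [abs_sub_comm] using this c' hc' c hc (le_of_not_ge hcc')
  have hmono := fun g hg0 hgint => integral_fermi_mul_mono hβ (m := g) hg0 hgint hcc'
  rw [abs_sub_comm, abs_of_nonneg (sub_nonneg.2 (hmono m hm0 hmint))]
  calc ∑ i ∈ s, |(∫ E, fermi β c E * τ i E) - ∫ E, fermi β c' E * τ i E|
      = ∑ i ∈ s, ((∫ E, fermi β c' E * τ i E) - ∫ E, fermi β c E * τ i E) :=
        sum_congr rfl fun i _ => by
          rw [abs_sub_comm, abs_of_nonneg (sub_nonneg.2 (hmono _ (hτ0 i) (hτint i)))]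
    _ = ((∫ E, fermi β c' E * m E) - ∫ E, fermi β c E * m E)
          - ((∫ E, fermi β c' E * m' E) - ∫ E, fermi β c E * m' E) := by
        rw [sum_sub_distrib, hmsplit, hmsplit]; ring
    _ ≤ (1 - ε) * ((∫ E, fermi β c' E * m E) - ∫ E, fermi β c E * m E) := by
        linarith [hratio c c' hc.1 hcc' hc'.2]

lemma sum_abs_sum_le_of_forall_sum_abs_le {ι κ : Type*} [Fintype ι] [Fintype κ]
    (a : ι → κ → ℝ) (v : κ → ℝ) {θ : ℝ} (h : ∀ j, ∑ i, |a i j| ≤ θ * |v j|) :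
    ∑ i, |∑ j, a i j| ≤ θ * ∑ j, |v j| :=
  calc ∑ i, |∑ j, a i j| ≤ ∑ i, ∑ j, |a i j| := sum_le_sum fun _ _ => abs_sum_le_sum_abs _ _
    _ = ∑ j, ∑ i, |a i j| := sum_comm
    _ ≤ ∑ j, θ * |v j| := sum_le_sum fun j _ => h j
    _ = θ * ∑ j, |v j| := (mul_sum _ _ _).symm

lemma exists_pos_forall_le {ι : Type*} [Finite ι] {f : ι → ℝ} (hf : ∀ i, 0 < f i) :
    ∃ ε > 0, ∀ i, ε ≤ f i :=
  have h : ∀ᶠ ε in nhdsWithin (0 : ℝ) (Ioi 0), ∀ i, ε ≤ f i :=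
    (eventually_all.2 fun i => eventually_le_nhds (hf i)).filter_mono nhdsWithin_le_nhds
  (h.and self_mem_nhdsWithin).exists.imp fun _ h => ⟨h.2, h.1⟩

lemma exists_unique_fixedPoint_of_sum_abs_le {ι : Type*} [Fintype ι] {S : Set (ι → ℝ)}
    (hS : IsClosed S) (hne : S.Nonempty) {F : (ι → ℝ) → ι → ℝ} (hmaps : MapsTo F S S) {θ : ℝ}
    (hθ : θ < 1) (hcon : ∀ x ∈ S, ∀ y ∈ S, ∑ j, |F x j - F y j| ≤ θ * ∑ j, |x j - y j|) :
    ∃ xs ∈ S, F xs = xs ∧ ∀ y ∈ S, F y = y → y = xs := by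
  have hdist : ∀ x y : PiLp 1 (fun _ : ι => ℝ), dist x y = ∑ j, |x j - y j| := fun x y => by
    simp [PiLp.dist_eq_of_L1, Real.dist_eq]
  set S' : Set (PiLp 1 (fun _ : ι => ℝ)) := WithLp.ofLp ⁻¹' S
  have hmaps' : MapsTo (fun x => WithLp.toLp 1 (F x.ofLp)) S' S' := fun x hx => hmaps hx
  have hcontr : ContractingWith θ.toNNReal (hmaps'.restrict _ S' S') := by
    refine ⟨by simpa using hθ, LipschitzWith.of_dist_le_mul fun x y => ?_⟩
    rw [Subtype.dist_eq, Subtype.dist_eq, hdist, hdist, Real.coe_toNNReal']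
    exact (hcon _ x.2 _ y.2).trans
      (mul_le_mul_of_nonneg_right (le_max_left _ _) (sum_nonneg fun _ _ => abs_nonneg _))
  obtain ⟨x₀, hx₀⟩ := hne
  obtain ⟨xs, hxs, hfix, -⟩ := hcontr.exists_fixedPoint'
    (hS.preimage (PiLp.continuous_ofLp 1 _)).isComplete hmaps' (x := WithLp.toLp 1 x₀) hx₀
    (edist_ne_top _ _)
  refine ⟨xs.ofLp, hxs, congrArg WithLp.ofLp hfix, fun y hy hFy => ?_⟩
  have h := hcon y hy _ hxs
  rw [hFy, show F xs.ofLp = xs.ofLp from congrArg WithLp.ofLp hfix] at h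
  have hnonneg : 0 ≤ ∑ j, |y j - xs j| := sum_nonneg fun _ _ => abs_nonneg _
  have hzero : ∑ j, |y j - xs j| = 0 := by nlinarith
  funext j
  exact sub_eq_zero.1 (abs_eq_zero.1
    ((sum_eq_zero_iff_of_nonneg fun _ _ => abs_nonneg _).1 hzero j (mem_univ j)))

lemma Fin.sum_univ_eq_sum_castLE_add_sum_filter {M : Type*} [AddCommMonoid M] {N p : ℕ}
    (hp : p ≤ N) (g : Fin N → M) :
    ∑ i, g i
      = ∑ i : Fin p, g (Fin.castLE hp i)
        + ∑ i ∈ univ.filter (fun i : Fin N => p ≤ (i : ℕ)), g i := by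
  rw [← sum_filter_add_sum_filter_not univ (fun i : Fin N => (i : ℕ) < p)]
  simp only [not_lt]
  congr 1
  refine (sum_nbij (Fin.castLE hp) (fun i _ => by simp) (Fin.castLE_injective hp).injOn
    (fun i hi => ?_) fun _ _ => rfl).symm
  exact ⟨⟨i, (mem_filter.1 (mem_coe.1 hi)).2⟩, by simp, rfl⟩

theorem contraction_and_unique_fixed_point_voltage_probes_general
    (N p : ℕ) (hp : p ≤ N) (β : ℝ) (hβ : 0 < β)
    (t : Fin N → Fin N → ℝ → ℝ)
    (htmeas : ∀ i j, Measurable (t i j)) (ht : ∀ i j E, 0 ≤ t i j E)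
    (M : Fin N → ℝ → ℝ)
    (hMdef : ∀ j E, M j E = ∑ i, t i j E)
    (hrow : ∀ i E, ∑ j, t i j E = M i E)
    (E₀ C η : ℝ)
    (hA : ∀ (j : Fin N) (E : ℝ), E ≤ E₀ → M j E = 0)
    (hB : ∀ (j : Fin N) (E : ℝ), M j E ≤ C * (1 + |E|) ^ η)
    (μ : Fin N → ℝ) (lo hi : ℝ)
    (hlo : IsLeast (μ '' {j : Fin N | p ≤ (j : ℕ)}) lo)
    (hhi : IsGreatest (μ '' {j : Fin N | p ≤ (j : ℕ)}) hi)
    -- Condition (C): each probe is connected to some thermostat on a set of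
    -- positive Lebesgue measure.
    (hCond : ∀ j : Fin p,
      volume {E : ℝ | 0 < ∑ i ∈ Finset.univ.filter (fun i : Fin N => p ≤ (i : ℕ)),
        t i (Fin.castLE hp j) E} ≠ 0)
    (X : Fin p → ℝ → ℝ)
    (hX : ∀ j c, X j c = ∫ E, fermi β c E * M (Fin.castLE hp j) E)
    (inv : Fin p → ℝ → ℝ)
    (hinv2 : ∀ j, ∀ x ∈ Set.Icc (X j lo) (X j hi),
      inv j x ∈ Set.Icc lo hi ∧ X j (inv j x) = x)
    (F : (Fin p → ℝ) → (Fin p → ℝ))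
    (hF : ∀ x i, F x i =
      (∑ j : Fin p, ∫ E, fermi β (inv j (x j)) E * t (Fin.castLE hp i) (Fin.castLE hp j) E)
      + ∑ j ∈ Finset.univ.filter (fun j : Fin N => p ≤ (j : ℕ)),
          ∫ E, fermi β (μ j) E * t (Fin.castLE hp i) j E) :
    ∃ θ < (1 : ℝ),
      (∀ x y : Fin p → ℝ,
        (∀ j, x j ∈ Set.Icc (X j lo) (X j hi)) →
        (∀ j, y j ∈ Set.Icc (X j lo) (X j hi)) →
        ∑ j, |F x j - F y j| ≤ θ * ∑ j, |x j - y j|) ∧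
      ∃ xs : Fin p → ℝ, (∀ j, xs j ∈ Set.Icc (X j lo) (X j hi)) ∧ F xs = xs ∧
        ∀ y : Fin p → ℝ, (∀ j, y j ∈ Set.Icc (X j lo) (X j hi)) → F y = y → y = xs := by
  set J := univ.filter fun j : Fin N => p ≤ (j : ℕ)
  have hlohi : lo ≤ hi := hhi.2 hlo.1
  have hμ : ∀ j ∈ J, μ j ∈ Icc lo hi := fun j hj =>
    ⟨hlo.2 ⟨j, (mem_filter.1 hj).2, rfl⟩, hhi.2 ⟨j, (mem_filter.1 hj).2, rfl⟩⟩
  have htM : ∀ i j E, t i j E ≤ M j E := fun i j E =>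
    hMdef j E ▸ single_le_sum (fun k _ => ht k j E) (mem_univ i)
  have htint : ∀ i j c, Integrable fun E => fermi β c E * t i j E := fun i j =>
    integrable_fermi_mul hβ (htmeas i j) (ht i j)
      (fun E hE => le_antisymm ((htM i j E).trans_eq (hA j E hE)) (ht i j E))
      (fun E => (htM i j E).trans (hB j E))
  have hsplit : ∀ j : Fin p, ∀ E, M (Fin.castLE hp j) E
      = ∑ i : Fin p, t (Fin.castLE hp i) (Fin.castLE hp j) E + ∑ i ∈ J, t i (Fin.castLE hp j) E :=
    fun j E => by rw [hMdef, Fin.sum_univ_eq_sum_castLE_add_sum_filter hp]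
  have hJint : ∀ j c, Integrable fun E => fermi β c E * ∑ i ∈ J, t i j E := fun j c => by
    simp only [mul_sum]
    exact integrable_finsetSum _ fun i _ => htint i j c
  choose ε hε hεcol using fun j : Fin p =>
    exists_pos_sum_abs_sub_integral_fermi_mul_le univ hβ.le hlohi (fun i => ht _ _)
      (fun E => sum_nonneg fun i _ => ht i _ E) (fun i => htint _ _) (hJint _) (hsplit j) (hCond j)
  obtain ⟨ε₀, hε₀, hε₀le⟩ := exists_pos_forall_le hε
  have hcontr : ∀ x y : Fin p → ℝ,
      (∀ j, x j ∈ Set.Icc (X j lo) (X j hi)) →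
      (∀ j, y j ∈ Set.Icc (X j lo) (X j hi)) →
      ∑ j, |F x j - F y j| ≤ (1 - ε₀) * ∑ j, |x j - y j| := by
    intro x y hx hy
    have hdiff : ∀ i, F x i - F y i = ∑ j : Fin p,
        ((∫ E, fermi β (inv j (x j)) E * t (Fin.castLE hp i) (Fin.castLE hp j) E)
          - ∫ E, fermi β (inv j (y j)) E * t (Fin.castLE hp i) (Fin.castLE hp j) E) := fun i => by
      rw [hF, hF, sum_sub_distrib]; ring
    simp only [hdiff]
    refine sum_abs_sum_le_of_forall_sum_abs_le _ _ fun j => ?_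
    obtain ⟨hxI, hXx⟩ := hinv2 j _ (hx j)
    obtain ⟨hyI, hXy⟩ := hinv2 j _ (hy j)
    calc _ ≤ (1 - ε j) * |X j (inv j (x j)) - X j (inv j (y j))| := by
          rw [hX, hX]; exact hεcol j _ hxI _ hyI
      _ ≤ (1 - ε₀) * |x j - y j| := by
        rw [hXx, hXy]; gcongr; linarith [hε₀le j]
  have hXrow : ∀ i c, X i c
      = ∑ j : Fin p, (∫ E, fermi β c E * t (Fin.castLE hp i) (Fin.castLE hp j) E)
        + ∑ j ∈ J, ∫ E, fermi β c E * t (Fin.castLE hp i) j E := fun i c => by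
    simp only [hX, ← hrow, mul_sum]
    rw [integral_finsetSum _ fun j _ => htint _ j c, Fin.sum_univ_eq_sum_castLE_add_sum_filter hp]
  have hmono := fun i j => integral_fermi_mul_mono hβ.le (ht i j) (htint i j)
  have hmaps : ∀ x : Fin p → ℝ, (∀ j, x j ∈ Set.Icc (X j lo) (X j hi)) →
      ∀ i, F x i ∈ Set.Icc (X i lo) (X i hi) := fun x hx i => by
    have hxI := fun j => (hinv2 j _ (hx j)).1
    rw [hXrow, hXrow, hF]
    exact ⟨add_le_add (sum_le_sum fun j _ => hmono _ _ (hxI j).1)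
        (sum_le_sum fun j hj => hmono _ _ (hμ j hj).1),
      add_le_add (sum_le_sum fun j _ => hmono _ _ (hxI j).2)
        (sum_le_sum fun j hj => hmono _ _ (hμ j hj).2)⟩
  have hXlohi : ∀ j, X j lo ≤ X j hi := fun j => by
    rw [hXrow, hXrow]
    exact add_le_add (sum_le_sum fun _ _ => hmono _ _ hlohi) (sum_le_sum fun _ _ => hmono _ _ hlohi)
  refine ⟨1 - ε₀, by linarith, hcontr, ?_⟩
  simpa only [Set.mem_univ_pi] using exists_unique_fixedPoint_of_sum_abs_le
    (isClosed_set_pi fun j _ => isClosed_Icc) ⟨fun j => X j lo, fun j _ => ⟨le_rfl, hXlohi j⟩⟩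
    (fun x hx => (mem_univ_pi.2 (hmaps x (mem_univ_pi.1 hx))))
    (θ := 1 - ε₀) (by linarith) fun x hx y hy => hcontr x y (mem_univ_pi.1 hx) (mem_univ_pi.1 hy)

/-- Lemma 2 + Banach fixed point (part (1) of Theorem 1): under Condition (C)
the map `F` is an `ℓ¹`-contraction on the box and the self-consistency
equation `F(X) = X` has a unique solution there. -/
theorem contraction_and_unique_fixed_point_voltage_probes
    (N p : ℕ) (hp : p ≤ N) (β : ℝ) (hβ : 0 < β)
    (t : Fin N → Fin N → ℝ → ℝ)
    (htmeas : ∀ i j, Measurable (t i j)) (ht : ∀ i j E, 0 ≤ t i j E)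
    (M : Fin N → ℝ → ℝ)
    (hMdef : ∀ j E, M j E = ∑ i, t i j E)
    (hrow : ∀ i E, ∑ j, t i j E = M i E)
    (E₀ C η : ℝ)
    (hA : ∀ (j : Fin N) (E : ℝ), E ≤ E₀ → M j E = 0)
    (hB : ∀ (j : Fin N) (E : ℝ), M j E ≤ C * (1 + |E|) ^ η)
    (μ : Fin N → ℝ) (lo hi : ℝ)
    (hlo : IsLeast (μ '' {j : Fin N | p ≤ (j : ℕ)}) lo)
    (hhi : IsGreatest (μ '' {j : Fin N | p ≤ (j : ℕ)}) hi)
    -- Condition (C): each probe is connected to some thermostat on a set of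
    -- positive Lebesgue measure.
    (hCond : ∀ j : Fin p,
      volume {E : ℝ | 0 < ∑ i ∈ Finset.univ.filter (fun i : Fin N => p ≤ (i : ℕ)),
        t i (Fin.castLE hp j) E} ≠ 0)
    (X : Fin p → ℝ → ℝ)
    (hX : ∀ j c, X j c = ∫ E, fermi β c E * M (Fin.castLE hp j) E)
    (inv : Fin p → ℝ → ℝ)
    (hinv1 : ∀ j, ∀ c ∈ Set.Icc lo hi, inv j (X j c) = c)
    (hinv2 : ∀ j, ∀ x ∈ Set.Icc (X j lo) (X j hi),
      inv j x ∈ Set.Icc lo hi ∧ X j (inv j x) = x)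
    (F : (Fin p → ℝ) → (Fin p → ℝ))
    (hF : ∀ x i, F x i =
      (∑ j : Fin p, ∫ E, fermi β (inv j (x j)) E * t (Fin.castLE hp i) (Fin.castLE hp j) E)
      + ∑ j ∈ Finset.univ.filter (fun j : Fin N => p ≤ (j : ℕ)),
          ∫ E, fermi β (μ j) E * t (Fin.castLE hp i) j E) :
    ∃ θ < (1 : ℝ),
      (∀ x y : Fin p → ℝ,
        (∀ j, x j ∈ Set.Icc (X j lo) (X j hi)) →
        (∀ j, y j ∈ Set.Icc (X j lo) (X j hi)) →
        ∑ j, |F x j - F y j| ≤ θ * ∑ j, |x j - y j|) ∧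
      ∃ xs : Fin p → ℝ, (∀ j, xs j ∈ Set.Icc (X j lo) (X j hi)) ∧ F xs = xs ∧
        ∀ y : Fin p → ℝ, (∀ j, y j ∈ Set.Icc (X j lo) (X j hi)) → F y = y → y = xs :=
  contraction_and_unique_fixed_point_voltage_probes_general N p hp β hβ t htmeas ht M hMdef hrow E₀
    C η hA hB μ lo hi hlo hhi hCond X hX inv hinv2 F hF
end
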